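/- arXiv:2601.19200 — 2 statements merged into one kernel-verified Lean document; each statement's English description precedes it below -/
import Mathlib

section
/- Let A be an algebra over a field F of characteristic zero, Ω a higher derivation on A determined by ordinary derivations {δ_i}_{i=1}^∞ (via (n+1)Ω_{n+1} = Σ_{k=0}^n δ_{k+1}∘Ω_{n-k}), M an A-module, and Ψ a higher Ω-derivation on M. Then there exists a sequence {d_i : M → M}_{i=1}^∞ of ordinary δ_i-derivations on M such that (n+1)·Ψ_{n+1} = Σ_{k=0}^n d_{k+1} ∘ Ψ_{n-k} for all n ≥ 0. -/
/-!
Since `Ψ 0 = id`, the relation `(n+1) Ψ_{n+1} = ∑ d_{k+1} Ψ_{n-k}` determines `d_{n+1}`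
recursively (in generating functions, `d(t) = t Ψ'(t) Ψ(t)⁻¹`). For the Leibniz rule of `d_{n+1}`,
expand `(n+1) Ψ_{n+1}(a m)` by the Leibniz rule of `Ψ`, splitting `n + 1 = i + j` in front of each
term `Ω_i(a) Ψ_j(m)`, and rewrite `i Ω_i` and `j Ψ_j` by the two recursions. Comparing with the
recursion for `Ψ` applied to `a m`, both sides are sums over `k + i + j = n` which agree term by
term by induction, except for the term containing `d_{n+1}(a m)`; hence that term agrees as well.
-/

open Finset

namespace Finset.Nat

variable {β : Type*} [AddCommMonoid β]

theorem sum_antidiagonal_sum_antidiagonal_snd (f : ℕ → ℕ → ℕ → β) (n : ℕ) :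
    ∑ p ∈ antidiagonal n, ∑ q ∈ antidiagonal p.2, f p.1 q.1 q.2 =
      ∑ p ∈ antidiagonal n, ∑ q ∈ antidiagonal p.1, f q.1 q.2 p.2 := by
  simp only [sum_sigma']
  apply sum_nbij' (fun x => ⟨(x.1.1 + x.2.1, x.2.2), (x.1.1, x.2.1)⟩)
    (fun x => ⟨(x.2.1, x.2.2 + x.1.2), (x.2.2, x.1.2)⟩) <;> aesop (add simp [add_assoc])

theorem sum_antidiagonal_sum_antidiagonal_snd_left_comm (f : ℕ → ℕ → ℕ → β) (n : ℕ) :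
    ∑ p ∈ antidiagonal n, ∑ q ∈ antidiagonal p.2, f p.1 q.1 q.2 =
      ∑ p ∈ antidiagonal n, ∑ q ∈ antidiagonal p.2, f q.1 p.1 q.2 := by
  simp only [sum_sigma']
  apply sum_nbij' (fun x => ⟨(x.2.1, x.1.1 + x.2.2), (x.1.1, x.2.2)⟩)
    (fun x => ⟨(x.2.1, x.1.1 + x.2.2), (x.1.1, x.2.2)⟩) <;> aesop (add simp [add_left_comm])

theorem succ_nsmul_sum_antidiagonal_succ (f : ℕ × ℕ → β) (n : ℕ) :
    (n + 1) • ∑ p ∈ antidiagonal (n + 1), f p =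
      ∑ p ∈ antidiagonal n, (p.2 + 1) • f (p.1, p.2 + 1) +
        ∑ p ∈ antidiagonal n, (p.1 + 1) • f (p.1 + 1, p.2) := by
  calc (n + 1) • ∑ p ∈ antidiagonal (n + 1), f p
      = ∑ p ∈ antidiagonal (n + 1), (p.2 • f p + p.1 • f p) := by
        rw [smul_sum]
        refine sum_congr rfl fun p hp => ?_
        rw [← add_nsmul, add_comm p.2, mem_antidiagonal.mp hp]
    _ = _ := by
        rw [sum_add_distrib, sum_antidiagonal_succ', sum_antidiagonal_succ]
        simp only [zero_smul, zero_add]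

end Finset.Nat

open Finset.Nat

section

variable {M : Type*} [AddCommGroup M]

def logDerivSeq (Ψ : ℕ → M →+ M) : ℕ → M →+ M
  | 0 => 0
  | n + 1 => (n + 1) • Ψ (n + 1) - ∑ k : Fin n, (logDerivSeq Ψ (k + 1)).comp (Ψ (n - k))

theorem sum_antidiagonal_logDerivSeq_comp {Ψ : ℕ → M →+ M} (hΨ0 : Ψ 0 = .id M) (n : ℕ) :
    ∑ p ∈ antidiagonal n, (logDerivSeq Ψ (p.1 + 1)).comp (Ψ p.2) = (n + 1) • Ψ (n + 1) := by
  rw [sum_antidiagonal_eq_sum_range_succ (fun i j => (logDerivSeq Ψ (i + 1)).comp (Ψ j)),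
    sum_range_succ, Nat.sub_self, hΨ0, AddMonoidHom.comp_id, logDerivSeq,
    ← Fin.sum_univ_eq_sum_range (fun k => (logDerivSeq Ψ (k + 1)).comp (Ψ (n - k)))]
  abel

theorem sum_antidiagonal_logDerivSeq_apply {Ψ : ℕ → M →+ M} (hΨ0 : Ψ 0 = .id M) (n : ℕ)
    (m : M) :
    ∑ p ∈ antidiagonal n, logDerivSeq Ψ (p.1 + 1) (Ψ p.2 m) = (n + 1) • Ψ (n + 1) m := by
  simpa [AddMonoidHom.finsetSum_apply] using
    congr($(sum_antidiagonal_logDerivSeq_comp hΨ0 n) m)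

variable {A : Type*} [Ring A] [Module A M] {Ω δ : ℕ → A → A} {Ψ : ℕ → M →+ M}

theorem succ_nsmul_apply_smul
    (hΩ : ∀ n a, (n + 1) • Ω (n + 1) a = ∑ p ∈ antidiagonal n, δ (p.1 + 1) (Ω p.2 a))
    (hΨ0 : Ψ 0 = .id M)
    (hΨ : ∀ n (a : A) m, Ψ n (a • m) = ∑ p ∈ antidiagonal n, Ω p.1 a • Ψ p.2 m)
    (n : ℕ) (a : A) (m : M) :
    (n + 1) • Ψ (n + 1) (a • m) = ∑ p ∈ antidiagonal n, ∑ q ∈ antidiagonal p.2,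
      (Ω q.1 a • logDerivSeq Ψ (p.1 + 1) (Ψ q.2 m) + δ (p.1 + 1) (Ω q.1 a) • Ψ q.2 m) := by
  have hd : ∑ p ∈ antidiagonal n, ∑ q ∈ antidiagonal p.2,
      Ω q.1 a • logDerivSeq Ψ (p.1 + 1) (Ψ q.2 m) =
        ∑ p ∈ antidiagonal n, (p.2 + 1) • (Ω p.1 a • Ψ (p.2 + 1) m) := by
    rw [sum_antidiagonal_sum_antidiagonal_snd_left_comm
      (fun k i j => Ω i a • logDerivSeq Ψ (k + 1) (Ψ j m))]
    refine sum_congr rfl fun p _ => ?_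
    rw [← smul_sum, sum_antidiagonal_logDerivSeq_apply hΨ0, smul_comm]
  have hδ : ∑ p ∈ antidiagonal n, ∑ q ∈ antidiagonal p.2, δ (p.1 + 1) (Ω q.1 a) • Ψ q.2 m =
      ∑ p ∈ antidiagonal n, (p.1 + 1) • (Ω (p.1 + 1) a • Ψ p.2 m) := by
    rw [sum_antidiagonal_sum_antidiagonal_snd (fun k i j => δ (k + 1) (Ω i a) • Ψ j m)]
    refine sum_congr rfl fun p _ => ?_
    rw [← sum_smul, ← hΩ, smul_assoc]
  simp only [sum_add_distrib]
  rw [hd, hδ, hΨ, succ_nsmul_sum_antidiagonal_succ (fun p => Ω p.1 a • Ψ p.2 m)]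

theorem logDerivSeq_succ_apply_smul (hΩ0 : ∀ a, Ω 0 a = a)
    (hΩ : ∀ n a, (n + 1) • Ω (n + 1) a = ∑ p ∈ antidiagonal n, δ (p.1 + 1) (Ω p.2 a))
    (hΨ0 : Ψ 0 = .id M)
    (hΨ : ∀ n (a : A) m, Ψ n (a • m) = ∑ p ∈ antidiagonal n, Ω p.1 a • Ψ p.2 m)
    (n : ℕ) (a : A) (m : M) :
    logDerivSeq Ψ (n + 1) (a • m) = a • logDerivSeq Ψ (n + 1) m + δ (n + 1) a • m := by
  induction n using Nat.strong_induction_on generalizing a m with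
  | _ n ih =>
  have hn : (n, 0) ∈ antidiagonal n := HasAntidiagonal.mem_antidiagonal.mpr (add_zero n)
  have key := (sum_antidiagonal_logDerivSeq_apply hΨ0 n (a • m)).trans
    (succ_nsmul_apply_smul hΩ hΨ0 hΨ n a m)
  rw [← add_sum_erase _ _ hn, ← add_sum_erase _ _ hn, sum_congr rfl fun p hp => ?_] at key
  · simpa [hΩ0, hΨ0] using add_right_cancel key
  have hp₁ : p.1 < n := by
    obtain ⟨hne, hp⟩ := mem_erase.mp hp
    rw [HasAntidiagonal.mem_antidiagonal] at hp
    by_contra! h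
    exact hne (Prod.ext (by omega) (by omega))
  rw [hΨ, map_sum]
  exact sum_congr rfl fun q _ => ih p.1 hp₁ _ _

end

theorem stmt_6_general {A M : Type*} [Ring A]
    [AddCommGroup M] [Module A M]
    (Ω δ : ℕ → A → A)
    (hΩ0 : ∀ a, Ω 0 a = a)
    (hrec : ∀ (n : ℕ) (a : A),
      (n + 1) • Ω (n + 1) a = ∑ k ∈ Finset.range (n + 1), δ (k + 1) (Ω (n - k) a))
    (Ψ : ℕ → M → M)
    (hΨadd : ∀ k m m', Ψ k (m + m') = Ψ k m + Ψ k m')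
    (hΨ0 : ∀ m, Ψ 0 m = m)
    (hΨ : ∀ k (a : A) (m : M),
      Ψ k (a • m) = ∑ i ∈ Finset.range (k + 1), Ω i a • Ψ (k - i) m) :
    ∃ d : ℕ → M → M,
      (∀ i, 1 ≤ i →
        (∀ m m', d i (m + m') = d i m + d i m') ∧
        (∀ (a : A) (m : M), d i (a • m) = a • d i m + δ i a • m)) ∧
      (∀ (n : ℕ) (m : M),
        (n + 1) • Ψ (n + 1) m = ∑ k ∈ Finset.range (n + 1), d (k + 1) (Ψ (n - k) m)) := by
  let ψ : ℕ → M →+ M := fun k => AddMonoidHom.mk' (Ψ k) (hΨadd k)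
  have hψ0 : ψ 0 = .id M := AddMonoidHom.ext hΨ0
  have hΩ : ∀ n a, (n + 1) • Ω (n + 1) a = ∑ p ∈ antidiagonal n, δ (p.1 + 1) (Ω p.2 a) :=
    fun n a => (hrec n a).trans
      (sum_antidiagonal_eq_sum_range_succ (fun i j => δ (i + 1) (Ω j a)) n).symm
  have hψ : ∀ n (a : A) m, ψ n (a • m) = ∑ p ∈ antidiagonal n, Ω p.1 a • ψ p.2 m :=
    fun n a m => (hΨ n a m).trans
      (sum_antidiagonal_eq_sum_range_succ (fun i j => Ω i a • Ψ j m) n).symm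
  refine ⟨fun i => logDerivSeq ψ i, fun i hi => ?_, fun n m => ?_⟩
  · obtain ⟨j, rfl⟩ := Nat.exists_eq_add_of_le' hi
    exact ⟨map_add _, logDerivSeq_succ_apply_smul hΩ0 hΩ hψ0 hψ j⟩
  · exact (sum_antidiagonal_logDerivSeq_apply hψ0 n m).symm.trans
      (sum_antidiagonal_eq_sum_range_succ (fun i j => logDerivSeq ψ (i + 1) (Ψ j m)) n)

/-- If the higher derivation `Ω` on `A` is determined by ordinary derivations `δ` and `Ψ` is a
higher `Ω`-derivation on an `A`-module `M`, then `Ψ` is determined by a sequence of ordinary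
`δ i`-derivations `d i` on `M` via `(n+1) • Ψ (n+1) = ∑_{k=0}^{n} d (k+1) ∘ Ψ (n-k)`. -/
theorem stmt_6 {F A M : Type*} [Field F] [CharZero F] [Ring A] [Algebra F A]
    [AddCommGroup M] [Module A M]
    (Ω δ : ℕ → A → A)
    (hΩadd : ∀ k a b, Ω k (a + b) = Ω k a + Ω k b)
    (hΩ0 : ∀ a, Ω 0 a = a)
    (hΩmul : ∀ k a b, Ω k (a * b) = ∑ i ∈ Finset.range (k + 1), Ω i a * Ω (k - i) b)
    (hδadd : ∀ i a b, δ i (a + b) = δ i a + δ i b)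
    (hδ : ∀ i, 1 ≤ i → ∀ a b : A, δ i (a * b) = δ i a * b + a * δ i b)
    (hrec : ∀ (n : ℕ) (a : A),
      (n + 1) • Ω (n + 1) a = ∑ k ∈ Finset.range (n + 1), δ (k + 1) (Ω (n - k) a))
    (Ψ : ℕ → M → M)
    (hΨadd : ∀ k m m', Ψ k (m + m') = Ψ k m + Ψ k m')
    (hΨ0 : ∀ m, Ψ 0 m = m)
    (hΨ : ∀ k (a : A) (m : M),
      Ψ k (a • m) = ∑ i ∈ Finset.range (k + 1), Ω i a • Ψ (k - i) m) :
    ∃ d : ℕ → M → M,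
      (∀ i, 1 ≤ i →
        (∀ m m', d i (m + m') = d i m + d i m') ∧
        (∀ (a : A) (m : M), d i (a • m) = a • d i m + δ i a • m)) ∧
      (∀ (n : ℕ) (m : M),
        (n + 1) • Ψ (n + 1) m = ∑ k ∈ Finset.range (n + 1), d (k + 1) (Ψ (n - k) m)) :=
  stmt_6_general Ω δ hΩ0 hrec Ψ hΨadd hΨ0 hΨ
end

section
/- Let 𝒞 be an F-linear category over a field F of characteristic zero, and (T, θ, ζ, Δ) a higher differential monad on 𝒞 (Δ = {Δ_i : T → T}_{i=0}^∞ with Δ_0 = id_T and Δ_i ∘ θ = θ ∘ Σ_{k=0}^i Δ_k ∗ Δ_{i-k}). Then there exists a sequence {δ_n : T → T}_{n=1}^∞ of ordinary derivations on T such that (n+1)·Δ_{n+1} = Σ_{k=0}^n δ_{k+1} ∘ Δ_{n-k} for each n ≥ 0. -/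
/-!
Write `Δ(t) = ∑ Δₙ tⁿ`. Since `Δ₀ = 1`, the equation `t Δ'(t) = Δ(t) ≫ δ(t)` can be solved
recursively for a series `δ(t)` with `δ₀ = 0`, and its coefficients satisfy the required sum
identity. The higher Leibniz rule says that `μ` intertwines the horizontal square `Δ(t) ◫ Δ(t)`
with `Δ(t)`. The Euler operator `t d/dt` obeys the Leibniz rule for `◫`, so the logarithmic
derivative of `Δ(t) ◫ Δ(t)` is `δ(t) ◫ 1 + 1 ◫ δ(t)`; and a morphism intertwining two series with
invertible constant term intertwines their logarithmic derivatives. Coefficientwise this is the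
statement that every `δₙ` is a derivation.
-/

open CategoryTheory Finset

namespace Finset.Nat

theorem sum_antidiagonal_eq_sum_range_succ_rev {M : Type*} [AddCommMonoid M] (f : ℕ → ℕ → M)
    (n : ℕ) : ∑ p ∈ antidiagonal n, f p.1 p.2 = ∑ k ∈ range (n + 1), f (n - k) k := by
  rw [← sum_antidiagonal_swap]
  exact sum_antidiagonal_eq_sum_range_succ (fun i j => f j i) n

theorem sum_antidiagonal_sum_antidiagonal_fst {M : Type*} [AddCommMonoid M]
    (f : ℕ → ℕ → ℕ → M) (n : ℕ) :
    ∑ p ∈ antidiagonal n, ∑ q ∈ antidiagonal p.1, f q.1 q.2 p.2 =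
      ∑ p ∈ antidiagonal n, ∑ q ∈ antidiagonal p.2, f p.1 q.1 q.2 := by
  simp only [sum_sigma']
  apply sum_nbij' (fun x => ⟨(x.2.1, x.2.2 + x.1.2), (x.2.2, x.1.2)⟩)
    (fun x => ⟨(x.1.1 + x.2.1, x.2.2), (x.1.1, x.2.1)⟩) <;> aesop (add simp [add_assoc])

end Finset.Nat

open Finset.Nat

namespace CategoryTheory

section LogDeriv

variable {𝒜 : Type*} [Category 𝒜] [Preadditive 𝒜] {X Y : 𝒜}

/-- With `α(t) = ∑ αₙ tⁿ` and `γ(t) = ∑ γₙ tⁿ`, this says `t α'(t) = α(t) ≫ γ(t)`. -/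
def IsLogDeriv (α γ : ℕ → (X ⟶ X)) : Prop :=
  ∀ n, ∑ p ∈ antidiagonal n, α p.1 ≫ γ p.2 = n • α n

def logDerivSeq (α : ℕ → (X ⟶ X)) : ℕ → (X ⟶ X)
  | n => n • α n - ∑ k ∈ (range n).attach, α (n - k) ≫ logDerivSeq α k
  termination_by n => n
  decreasing_by exact mem_range.mp k.2

theorem logDerivSeq_eq (α : ℕ → (X ⟶ X)) (n : ℕ) :
    logDerivSeq α n = n • α n - ∑ k ∈ range n, α (n - k) ≫ logDerivSeq α k := by
  rw [logDerivSeq, sum_attach (range n) fun k => α (n - k) ≫ logDerivSeq α k]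

theorem logDerivSeq_zero (α : ℕ → (X ⟶ X)) : logDerivSeq α 0 = 0 := by
  rw [logDerivSeq_eq]
  simp

theorem isLogDeriv_logDerivSeq {α : ℕ → (X ⟶ X)} (h0 : α 0 = 𝟙 X) :
    IsLogDeriv α (logDerivSeq α) := by
  intro n
  rw [sum_antidiagonal_eq_sum_range_succ_rev (fun i j => α i ≫ logDerivSeq α j), sum_range_succ,
    Nat.sub_self, h0, Category.id_comp, logDerivSeq_eq α n]
  abel

theorem eq_zero_of_sum_antidiagonal_comp_eq_zero {P : ℕ → (X ⟶ X)} (hP0 : P 0 = 𝟙 X)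
    {e : ℕ → (X ⟶ Y)} (h : ∀ n, ∑ p ∈ antidiagonal n, P p.1 ≫ e p.2 = 0) (n : ℕ) : e n = 0 := by
  induction n using Nat.strong_induction_on with
  | _ n ih =>
    rw [← h n, sum_eq_single_of_mem (0, n) (HasAntidiagonal.mem_antidiagonal.mpr (zero_add n)),
      hP0, Category.id_comp]
    rintro ⟨i, j⟩ hij hne
    have hj : j < n := by
      rw [HasAntidiagonal.mem_antidiagonal] at hij
      by_contra!
      exact hne (Prod.ext (by simp only; omega) (by simp only; omega))
    rw [ih j hj, Limits.comp_zero]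

theorem IsLogDeriv.intertwining {P ε : ℕ → (X ⟶ X)} {Q γ : ℕ → (Y ⟶ Y)} (hP : IsLogDeriv P ε)
    (hQ : IsLogDeriv Q γ) (hP0 : P 0 = 𝟙 X) (φ : X ⟶ Y) (hφ : ∀ n, φ ≫ Q n = P n ≫ φ) (n : ℕ) :
    φ ≫ γ n = ε n ≫ φ := by
  rw [← sub_eq_zero]
  refine eq_zero_of_sum_antidiagonal_comp_eq_zero (e := fun m => φ ≫ γ m - ε m ≫ φ) hP0
    (fun N => ?_) n
  calc ∑ p ∈ antidiagonal N, P p.1 ≫ (φ ≫ γ p.2 - ε p.2 ≫ φ)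
      = φ ≫ (∑ p ∈ antidiagonal N, Q p.1 ≫ γ p.2) -
          (∑ p ∈ antidiagonal N, P p.1 ≫ ε p.2) ≫ φ := by
        simp only [Preadditive.comp_sub, sum_sub_distrib, Preadditive.comp_sum,
          Preadditive.sum_comp, Category.assoc, reassoc_of% hφ]
    _ = 0 := by rw [hQ, hP, Preadditive.comp_nsmul, Preadditive.nsmul_comp, hφ, sub_self]

end LogDeriv

namespace NatTrans

variable {C D E : Type*} [Category C] [Category D] [Category E] [Preadditive E]
  {F G : C ⥤ D} {H I : D ⥤ E}

theorem sum_hcomp [Preadditive D] [I.Additive] {ι : Type*} (s : Finset ι) (α : ι → (F ⟶ G))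
    (β : H ⟶ I) :
    (∑ i ∈ s, α i) ◫ β = ∑ i ∈ s, α i ◫ β := by
  ext X
  simp [app_sum, Functor.map_sum, Preadditive.comp_sum]

theorem hcomp_sum {ι : Type*} (s : Finset ι) (α : F ⟶ G) (β : ι → (H ⟶ I)) :
    α ◫ ∑ i ∈ s, β i = ∑ i ∈ s, α ◫ β i := by
  ext X
  simp [app_sum, Preadditive.sum_comp]

theorem nsmul_hcomp [Preadditive D] [I.Additive] (n : ℕ) (α : F ⟶ G) (β : H ⟶ I) :
    (n • α) ◫ β = n • (α ◫ β) := by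
  ext X
  simp

theorem hcomp_nsmul (n : ℕ) (α : F ⟶ G) (β : H ⟶ I) : α ◫ (n • β) = n • (α ◫ β) := by
  ext X
  simp

end NatTrans

section HComp

open NatTrans

variable {C D E : Type*} [Category C] [Category D] [Category E] [Preadditive E]
  {F : C ⥤ D} {H : D ⥤ E}

def hcompConv (α : ℕ → (F ⟶ F)) (β : ℕ → (H ⟶ H)) (n : ℕ) : F ⋙ H ⟶ F ⋙ H :=
  ∑ p ∈ antidiagonal n, α p.1 ◫ β p.2

theorem hcompConv_app (α : ℕ → (F ⟶ F)) (β : ℕ → (H ⟶ H)) (n : ℕ) (X : C) :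
    (hcompConv α β n).app X =
      ∑ k ∈ range (n + 1), H.map ((α (n - k)).app X) ≫ (β k).app (F.obj X) := by
  simp only [hcompConv, app_sum, hcomp_app, ← naturality]
  exact sum_antidiagonal_eq_sum_range_succ_rev (fun i j => H.map ((α i).app X) ≫ (β j).app _) n

theorem IsLogDeriv.hcomp [Preadditive D] [H.Additive] {α γ : ℕ → (F ⟶ F)} {β ε : ℕ → (H ⟶ H)}
    (hα : IsLogDeriv α γ) (hβ : IsLogDeriv β ε) :
    IsLogDeriv (hcompConv α β) (fun n => γ n ◫ 𝟙 H + 𝟙 F ◫ ε n) := by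
  intro N
  have hterm : ∀ i m, hcompConv α β i ≫ (γ m ◫ 𝟙 H + 𝟙 F ◫ ε m) =
      ∑ q ∈ antidiagonal i, (α q.1 ≫ γ m) ◫ β q.2 +
        ∑ q ∈ antidiagonal i, α q.1 ◫ (β q.2 ≫ ε m) := by
    intro i m
    simp only [hcompConv, Preadditive.sum_comp, Preadditive.comp_add, ← exchange,
      Category.comp_id]
  have hleft : ∑ p ∈ antidiagonal N, ∑ q ∈ antidiagonal p.1, (α q.1 ≫ γ p.2) ◫ β q.2 =
      ∑ p ∈ antidiagonal N, p.1 • (α p.1 ◫ β p.2) := by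
    rw [sum_antidiagonal_sum_antidiagonal_fst (fun a b m => (α a ≫ γ m) ◫ β b)]
    simp only [← sum_antidiagonal_swap (f := fun q : ℕ × ℕ => (α _ ≫ γ q.2) ◫ β q.1),
      Prod.fst_swap, Prod.snd_swap]
    rw [← sum_antidiagonal_sum_antidiagonal_fst (fun a m b => (α a ≫ γ m) ◫ β b)]
    simp only [← sum_hcomp, hα _, nsmul_hcomp]
  have hright : ∑ p ∈ antidiagonal N, ∑ q ∈ antidiagonal p.1, α q.1 ◫ (β q.2 ≫ ε p.2) =
      ∑ p ∈ antidiagonal N, p.2 • (α p.1 ◫ β p.2) := by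
    rw [sum_antidiagonal_sum_antidiagonal_fst (fun a b m => α a ◫ (β b ≫ ε m))]
    simp only [← hcomp_sum, hβ _, hcomp_nsmul]
  rw [sum_congr rfl fun p _ => hterm p.1 p.2, sum_add_distrib, hleft, hright, ← sum_add_distrib,
    hcompConv, smul_sum]
  refine sum_congr rfl fun p hp => ?_
  rw [← add_nsmul, HasAntidiagonal.mem_antidiagonal.mp hp]

end HComp

end CategoryTheory

theorem stmt_10_general
    {C : Type*} [Category C] [Preadditive C]
    (T : Monad C) [T.toFunctor.Additive]
    (Δ : ℕ → (T.toFunctor ⟶ T.toFunctor))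
    (hΔ0 : Δ 0 = 𝟙 T.toFunctor)
    (hΔ : ∀ (i : ℕ) (M : C), T.μ.app M ≫ (Δ i).app M =
      (∑ k ∈ Finset.range (i + 1),
        T.map ((Δ (i - k)).app M) ≫ (Δ k).app (T.obj M)) ≫ T.μ.app M) :
    ∃ δ : ℕ → (T.toFunctor ⟶ T.toFunctor),
      (∀ (n : ℕ) (M : C), T.μ.app M ≫ (δ (n + 1)).app M =
        (T.map ((δ (n + 1)).app M) + (δ (n + 1)).app (T.obj M)) ≫ T.μ.app M) ∧
      (∀ n : ℕ, (n + 1) • Δ (n + 1) =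
        ∑ k ∈ Finset.range (n + 1), Δ (n - k) ≫ δ (k + 1)) := by
  have hlog : IsLogDeriv Δ (logDerivSeq Δ) := isLogDeriv_logDerivSeq hΔ0
  have hμ : ∀ n, T.μ ≫ Δ n = hcompConv Δ Δ n ≫ T.μ := fun n => by
    ext M
    simpa [hcompConv_app] using hΔ n M
  have hconv0 : hcompConv Δ Δ 0 = 𝟙 _ := by simp [hcompConv, hΔ0]
  have hleibniz := (hlog.hcomp hlog).intertwining hlog hconv0 T.μ hμ
  refine ⟨logDerivSeq Δ, fun n M => by simpa using NatTrans.congr_app (hleibniz (n + 1)) M,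
    fun n => ?_⟩
  rw [← hlog (n + 1), sum_antidiagonal_succ', logDerivSeq_zero, Limits.comp_zero, zero_add]
  exact sum_antidiagonal_eq_sum_range_succ_rev (fun i j => Δ i ≫ logDerivSeq Δ (j + 1)) n

/-- Characterization of higher derivations on a monad: if `(T,θ,ζ,Δ)` is a higher differential
monad on an `F`-linear category (`F` of characteristic zero), then there is a sequence
`δ` of ordinary derivations on `T` with `(n+1) • Δ (n+1) = ∑_{k=0}^n δ (k+1) ∘ Δ (n-k)`. -/
theorem stmt_10 {F : Type*} [Field F] [CharZero F]
    {C : Type*} [Category C] [Preadditive C] [Linear F C]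
    (T : Monad C) [T.toFunctor.Additive] [Functor.Linear F T.toFunctor]
    (Δ : ℕ → (T.toFunctor ⟶ T.toFunctor))
    (hΔ0 : Δ 0 = 𝟙 T.toFunctor)
    (hΔ : ∀ (i : ℕ) (M : C), T.μ.app M ≫ (Δ i).app M =
      (∑ k ∈ Finset.range (i + 1),
        T.map ((Δ (i - k)).app M) ≫ (Δ k).app (T.obj M)) ≫ T.μ.app M) :
    ∃ δ : ℕ → (T.toFunctor ⟶ T.toFunctor),
      (∀ (n : ℕ) (M : C), T.μ.app M ≫ (δ (n + 1)).app M =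
        (T.map ((δ (n + 1)).app M) + (δ (n + 1)).app (T.obj M)) ≫ T.μ.app M) ∧
      (∀ n : ℕ, (n + 1) • Δ (n + 1) =
        ∑ k ∈ Finset.range (n + 1), Δ (n - k) ≫ δ (k + 1)) :=
  stmt_10_general T Δ hΔ0 hΔ
end
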